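/- arXiv:math/0703866 — 3 statements merged into one kernel-verified Lean document; each statement's English description precedes it below -/
import Mathlib

section
/- Let M ≥ 1 and l > M be integers, and let b : Fin n → ℕ be given by b_0 = M and b_i = b_{i-1} + a_i with 0 ≤ a_i ≤ M for i = 1,…,n−1. Then there is no index j such that the sequence obtained from b by replacing b_j with b_j − l is still a valid interlacing sequence, i.e. satisfies 0 ≤ b̃_0 ≤ b_0 ≤ b̃_1 ≤ b_1 ≤ … ≤ b̃_{n-1} ≤ b_{n-1}. (Subtracting l from b_0 gives a negative entry, and subtracting l from b_i with i ≥ 1 gives b_i − l < b_{i-1}.) -/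
/-- `bt` interlaces `b` (on indices `0, …, n-1`):
`0 ≤ bt 0 ≤ b 0 ≤ bt 1 ≤ b 1 ≤ … ≤ bt (n-1) ≤ b (n-1)`. -/
def Interlaces (n : ℕ) (bt b : ℕ → ℤ) : Prop :=
  0 ≤ bt 0 ∧ (∀ i < n, bt i ≤ b i) ∧ (∀ i, i + 1 < n → b i ≤ bt (i + 1))

namespace Interlaces

variable {n j : ℕ} {b : ℕ → ℤ} {l : ℤ}

theorem le_of_sub_at_zero (h : Interlaces n (fun i => if i = 0 then b i - l else b i) b) :
    l ≤ b 0 := by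
  have h0 := h.1
  simp only [if_true] at h0
  linarith

theorem le_sub_of_sub_at (hj : 0 < j) (hjn : j < n)
    (h : Interlaces n (fun i => if i = j then b i - l else b i) b) :
    l ≤ b j - b (j - 1) := by
  have hprev := h.2.2 (j - 1) (by omega)
  simp only [Nat.sub_add_cancel hj, if_true] at hprev
  linarith

end Interlaces

theorem stmt6_general (n M l : ℕ) (hl : M < l)
    (b : ℕ → ℤ) (hb0 : b 0 = (M : ℤ))
    (hstep : ∀ i, 1 ≤ i → i < n →
      0 ≤ b i - b (i - 1) ∧ b i - b (i - 1) ≤ (M : ℤ)) :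
    ¬ ∃ j < n, Interlaces n (fun i => if i = j then b i - (l : ℤ) else b i) b := by
  rintro ⟨j, hjn, h⟩
  rcases Nat.eq_zero_or_pos j with rfl | hj
  · have := h.le_of_sub_at_zero
    omega
  · have := h.le_sub_of_sub_at hj hjn
    have := (hstep j hj hjn).2
    omega

theorem stmt6 (n M l : ℕ) (hn : 1 ≤ n) (hM : 1 ≤ M) (hl : M < l)
    (b : ℕ → ℤ) (hb0 : b 0 = (M : ℤ))
    (hstep : ∀ i, 1 ≤ i → i < n →
      0 ≤ b i - b (i - 1) ∧ b i - b (i - 1) ≤ (M : ℤ)) :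
    ¬ ∃ j < n, Interlaces n (fun i => if i = j then b i - (l : ℤ) else b i) b :=
  stmt6_general n M l hl b hb0 hstep
end

section
/- Let n ≥ 1 and let b_0 ≤ b_1 ≤ … ≤ b_{n-1} be integers, and let b̃ interlace b (meaning b̃_0 ≤ b_0 ≤ b̃_1 ≤ b_1 ≤ … ≤ b̃_{n-1} ≤ b_{n-1}). Suppose there exist two indices i < j with b̃_i < b_i and b̃_j < b_j, and suppose further that as multisets {c} ∪ {b_m + m + 2 : b̃_m ≠ b_m} = {c + l} ∪ {b̃_m + m + 2 : b̃_m ≠ b_m} for some integers c and l > 0, where l = Σ(b_m − b̃_m). Then a contradiction follows; hence if the two multisets are equal, b̃ differs from b in at most one entry. -/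
/-!
Shifting by the index turns the monotone sequence `b` into the strictly increasing
`m ↦ b m + m + 2`, and interlacing separates each of its values from every value
`b̃ s + s + 2` with `b̃ s ≠ b s`: below `t` one has `b̃ s + s < b s + s ≤ b t + t`, above `t`
one has `b̃ s ≥ b (s - 1) ≥ b t`. Hence every `b t + t + 2` with `b̃ t ≠ b t` must be matched
by the extra element `c + l` of the right-hand multiset, which is impossible for the two
distinct values coming from `i < j`.
-/

open Finset

theorem Multiset.eq_of_singleton_add_eq_singleton_add {α : Type*} {c d x : α}
    {A B : Multiset α} (h : {c} + A = {d} + B) (hxA : x ∈ A) (hxB : x ∉ B) : x = d := by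
  have hx : x ∈ {d} + B := h ▸ Multiset.mem_add.mpr (Or.inr hxA)
  simpa [hxB] using hx

section Interlacing

variable {n : ℕ} {b bt : ℕ → ℤ}

theorem strictMonoOn_add_index (hmono : ∀ i, i + 1 < n → b i ≤ b (i + 1)) :
    StrictMonoOn (fun m => b m + (m : ℤ) + 2) (Set.Iio n) :=
  strictMonoOn_of_lt_succ Set.ordConnected_Iio fun a _ _ ha => by
    have := hmono a ha
    simp only [Order.succ_eq_add_one, Nat.cast_add, Nat.cast_one]
    omega

theorem add_index_lt_of_le (hmono : ∀ i, i + 1 < n → b i ≤ b (i + 1))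
    {s t : ℕ} (hst : s ≤ t) (htn : t < n) (hs : bt s < b s) :
    bt s + (s : ℤ) + 2 < b t + (t : ℤ) + 2 := by
  have := (strictMonoOn_add_index hmono).monotoneOn (lt_of_le_of_lt hst htn) htn hst
  omega

theorem add_index_lt_of_lt (hmono : ∀ i, i + 1 < n → b i ≤ b (i + 1))
    (hint : ∀ i, i + 1 < n → b i ≤ bt (i + 1)) {s t : ℕ} (hts : t < s) (hsn : s < n) :
    b t + (t : ℤ) + 2 < bt s + (s : ℤ) + 2 := by
  obtain ⟨u, rfl⟩ : ∃ u, s = u + 1 := ⟨s - 1, by omega⟩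
  have hbu := (strictMonoOn_add_index hmono).monotoneOn (Set.mem_Iio.mpr (by omega))
    (Set.mem_Iio.mpr (by omega)) (Nat.lt_succ_iff.mp hts)
  have := hint u hsn
  push_cast
  omega

theorem add_index_ne (hmono : ∀ i, i + 1 < n → b i ≤ b (i + 1))
    (hle : ∀ i < n, bt i ≤ b i) (hint : ∀ i, i + 1 < n → b i ≤ bt (i + 1))
    {s t : ℕ} (hsn : s < n) (htn : t < n) (hs : bt s ≠ b s) :
    b t + (t : ℤ) + 2 ≠ bt s + (s : ℤ) + 2 := by
  rcases le_or_gt s t with hst | hts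
  · exact (add_index_lt_of_le hmono hst htn (lt_of_le_of_ne (hle s hsn) hs)).ne'
  · exact (add_index_lt_of_lt hmono hint hts hsn).ne

end Interlacing

theorem stmt7_general (n : ℕ) (b bt : ℕ → ℤ)
    (hmono : ∀ i, i + 1 < n → b i ≤ b (i + 1))
    (hle : ∀ i < n, bt i ≤ b i)
    (hint : ∀ i, i + 1 < n → b i ≤ bt (i + 1))
    (i j : ℕ) (hij : i < j) (hjn : j < n) (hi : bt i < b i) (hj : bt j < b j)
    (c l : ℤ)
    (hms : ({c} : Multiset ℤ) +
        ((Finset.range n).filter (fun m => bt m ≠ b m)).val.map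
          (fun m => b m + (m : ℤ) + 2)
      = ({c + l} : Multiset ℤ) +
        ((Finset.range n).filter (fun m => bt m ≠ b m)).val.map
          (fun m => bt m + (m : ℤ) + 2)) :
    False := by
  have hmatched : ∀ t < n, bt t < b t → b t + (t : ℤ) + 2 = c + l := by
    intro t htn ht
    refine Multiset.eq_of_singleton_add_eq_singleton_add hms
      (Multiset.mem_map_of_mem _ (by simpa using ⟨htn, ht.ne⟩)) ?_
    simp only [Multiset.mem_map, Finset.mem_val, Finset.mem_filter, Finset.mem_range, not_exists,
      not_and, and_imp]
    exact fun s hsn hs => (add_index_ne hmono hle hint hsn htn hs).symm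
  have hin : i < n := hij.trans hjn
  have hlt := strictMonoOn_add_index hmono hin hjn hij
  simp only [hmatched i hin hi, hmatched j hjn hj, lt_self_iff_false] at hlt

theorem stmt7 (n : ℕ) (hn : 1 ≤ n) (b bt : ℕ → ℤ)
    (hmono : ∀ i, i + 1 < n → b i ≤ b (i + 1))
    (hle : ∀ i < n, bt i ≤ b i)
    (hint : ∀ i, i + 1 < n → b i ≤ bt (i + 1))
    (i j : ℕ) (hij : i < j) (hjn : j < n) (hi : bt i < b i) (hj : bt j < b j)
    (c l : ℤ) (hl : 0 < l)
    (hlsum : l = ∑ m ∈ Finset.range n, (b m - bt m))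
    (hms : ({c} : Multiset ℤ) +
        ((Finset.range n).filter (fun m => bt m ≠ b m)).val.map
          (fun m => b m + (m : ℤ) + 2)
      = ({c + l} : Multiset ℤ) +
        ((Finset.range n).filter (fun m => bt m ≠ b m)).val.map
          (fun m => bt m + (m : ℤ) + 2)) :
    False :=
  stmt7_general n b bt hmono hle hint i j hij hjn hi hj c l hms
end

section
/- With notation as above, set ω = −(1/(n+1))(nk + Σ_{i=1}^{n-1}(n−i) a_i), λ_{n−j} = a_1 + ⋯ + a_j for 1 ≤ j ≤ n−1 (and λ_m determined by λ_m − λ_{m+1} = a_{n−m}, λ_n = 0), α = −L_n, |α|² = (n−1)/(n+1), and ρ = Σ_{i=1}^{n-1}(n−i)L_i. Then the equation ω = (α + L_{n−j}, ρ) − (1/2)(l−1)(|α|² + 1) + (L_{n−j}, λ̃) holds if and only if k = −(a_1 + ⋯ + a_j + j − l + 1). -/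
/-! With the pairing written in closed form, `(x, y) = (n Σ xᵢyᵢ − (Σ xᵢ)(Σ yᵢ))/(n+1)`, every term
of the weight condition is explicit: `(α + L_{n−j}, ρ) = nj/(n+1)`, `|α|² + 1 = 2n/(n+1)`, and
`(L_{n−j}, λ) = (n(a₁ + ⋯ + a_j) − Σ_m λ_m)/(n+1)`, where exchanging the order of summation gives
`Σ_m λ_m = Σ_i (n − i) aᵢ`, the sum occurring in `ω`. The condition thus becomes
`n (k + a₁ + ⋯ + a_j + j − l + 1) = 0`, and `n ≠ 0`. -/

open Finset

noncomputable def weightPairing (n : ℕ) (x y : ℕ → ℝ) : ℝ :=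
  ∑ i ∈ Icc 1 n, ∑ m ∈ Icc 1 n,
    x i * y m * (((n : ℝ) * (if i = m then 1 else 0) - 1) / ((n : ℝ) + 1))

theorem weightPairing_eq (n : ℕ) (x y : ℕ → ℝ) :
    weightPairing n x y =
      ((n : ℝ) * ∑ i ∈ Icc 1 n, x i * y i - (∑ i ∈ Icc 1 n, x i) * ∑ i ∈ Icc 1 n, y i)
        / ((n : ℝ) + 1) := by
  have entry : ∀ i m, x i * y m * (((n : ℝ) * (if i = m then 1 else 0) - 1) / ((n : ℝ) + 1))
      = ((n : ℝ) * (if i = m then x i * y m else 0) - x i * y m) / ((n : ℝ) + 1) := by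
    intro i m
    split_ifs <;> ring
  simp only [weightPairing, entry, ← sum_div, sum_sub_distrib, ← mul_sum, sum_ite_eq, sum_ite_mem,
    inter_self, sum_mul_sum]

theorem sum_Icc_sum_Icc_tsub {M : Type*} [AddCommMonoid M] (n : ℕ) (f : ℕ → M) :
    ∑ m ∈ Icc 1 n, ∑ i ∈ Icc 1 (n - m), f i = ∑ i ∈ Icc 1 (n - 1), (n - i) • f i := by
  rw [sum_comm' (t' := Icc 1 (n - 1)) (s' := fun i => Icc 1 (n - i))]
  · simp only [sum_const, Nat.card_Icc, Nat.add_sub_cancel]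
  · intro m i
    simp only [mem_Icc]
    omega

theorem sum_Icc_sum_Icc_tsub_real (n : ℕ) (f : ℕ → ℝ) :
    ∑ m ∈ Icc 1 n, ∑ i ∈ Icc 1 (n - m), f i = ∑ i ∈ Icc 1 (n - 1), ((n : ℝ) - i) * f i := by
  rw [sum_Icc_sum_Icc_tsub]
  refine sum_congr rfl fun i hi => ?_
  rw [nsmul_eq_mul, Nat.cast_sub (by simp only [mem_Icc] at hi; omega)]

theorem stmt10_general (n : ℕ) (hn : 1 ≤ n) (a : ℕ → ℕ)
    (j l : ℕ) (hj : j ≤ n - 1) (k : ℤ) :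
    let B : (ℕ → ℝ) → (ℕ → ℝ) → ℝ := fun x y =>
      ∑ i ∈ Finset.Icc 1 n, ∑ m ∈ Finset.Icc 1 n,
        x i * y m * (((n : ℝ) * (if i = m then 1 else 0) - 1) / ((n : ℝ) + 1));
    let L : ℕ → ℕ → ℝ := fun m i => if i = m then 1 else 0;
    let α : ℕ → ℝ := fun i => if i = n then -1 else 0;
    let ρ : ℕ → ℝ := fun i => (n : ℝ) - (i : ℝ);
    let lam : ℕ → ℝ := fun m => ∑ i ∈ Finset.Icc 1 (n - m), (a i : ℝ);
    let ω : ℝ := -(1 / ((n : ℝ) + 1)) *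
      ((n : ℝ) * (k : ℝ) + ∑ i ∈ Finset.Icc 1 (n - 1), ((n : ℝ) - (i : ℝ)) * (a i : ℝ));
    (ω = B (fun i => α i + L (n - j) i) ρ
        - (1/2) * ((l : ℝ) - 1) * (B α α + 1) + B (L (n - j)) lam)
    ↔ k = -((∑ i ∈ Finset.Icc 1 j, (a i : ℤ)) + (j : ℤ) - (l : ℤ) + 1) := by
  intro B L α ρ lam ω
  set A : ℝ := ∑ i ∈ Icc 1 j, (a i : ℝ)
  set S : ℝ := ∑ i ∈ Icc 1 (n - 1), ((n : ℝ) - i) * a i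
  have hB : B = weightPairing n := rfl
  have hω : ω = -(1 / ((n : ℝ) + 1)) * (n * k + S) := rfl
  have hn_mem : n ∈ Icc 1 n := mem_Icc.2 ⟨hn, le_rfl⟩
  have hnj_mem : n - j ∈ Icc 1 n := mem_Icc.2 ⟨by omega, Nat.sub_le n j⟩
  have hρn : ρ n = 0 := sub_self _
  have hρnj : ρ (n - j) = j := by
    simp only [ρ]
    rw [Nat.cast_sub (by omega)]
    ring
  have hlam : lam (n - j) = A := by simp only [lam, A, Nat.sub_sub_self (by omega : j ≤ n)]
  have hlam_sum : ∑ m ∈ Icc 1 n, lam m = S := sum_Icc_sum_Icc_tsub_real n _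
  have key : ω - (B (fun i => α i + L (n - j) i) ρ
        - (1/2) * ((l : ℝ) - 1) * (B α α + 1) + B (L (n - j)) lam)
      = -((n : ℝ) / (n + 1)) * (k + (A + j - l + 1)) := by
    simp only [hB, weightPairing_eq, α, L, add_mul, ite_mul, neg_one_mul, one_mul, zero_mul,
      sum_add_distrib, sum_ite_eq', hn_mem, hnj_mem, if_true, hρn, hρnj, hlam, hlam_sum, hω]
    field_simp
    ring
  rw [← sub_eq_zero, key, neg_mul, neg_eq_zero, mul_eq_zero, or_iff_right (by positivity),
    add_eq_zero_iff_eq_neg, ← Int.cast_inj (α := ℝ)]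
  push_cast
  rfl

theorem stmt10 (n : ℕ) (hn : 1 ≤ n) (a : ℕ → ℕ)
    (j l : ℕ) (hj : j ≤ n - 1) (hl : 1 ≤ l) (k : ℤ) :
    let B : (ℕ → ℝ) → (ℕ → ℝ) → ℝ := fun x y =>
      ∑ i ∈ Finset.Icc 1 n, ∑ m ∈ Finset.Icc 1 n,
        x i * y m * (((n : ℝ) * (if i = m then 1 else 0) - 1) / ((n : ℝ) + 1));
    let L : ℕ → ℕ → ℝ := fun m i => if i = m then 1 else 0;
    let α : ℕ → ℝ := fun i => if i = n then -1 else 0;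
    let ρ : ℕ → ℝ := fun i => (n : ℝ) - (i : ℝ);
    let lam : ℕ → ℝ := fun m => ∑ i ∈ Finset.Icc 1 (n - m), (a i : ℝ);
    let ω : ℝ := -(1 / ((n : ℝ) + 1)) *
      ((n : ℝ) * (k : ℝ) + ∑ i ∈ Finset.Icc 1 (n - 1), ((n : ℝ) - (i : ℝ)) * (a i : ℝ));
    (ω = B (fun i => α i + L (n - j) i) ρ
        - (1/2) * ((l : ℝ) - 1) * (B α α + 1) + B (L (n - j)) lam)
    ↔ k = -((∑ i ∈ Finset.Icc 1 j, (a i : ℤ)) + (j : ℤ) - (l : ℤ) + 1) :=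
  stmt10_general n hn a j l hj k
end
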